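/- For every integer m ≥ 0 there exists a constant C_m > 0 such that for every n ∈ ℤ⁺, every real-valued f ∈ C_b^m(Γ\G), and every matrix [[a,b],[c,d]] ∈ SL(2,ℝ): | f̃_n([[a,b],[c,d]]) | ≤ C_m · ‖f‖_{C_b^m} / ( n^m (c² + d²)^{m/2} ). -/

import Mathlib

/-! Right translation by `e₄(t)` or `e₅(t)` moves the point `(1₂, ξ)(M, 0)` to `(1₂, ξ + t w)(M, 0)`
with `w = (1,0)M⁻¹ = (d,-b)` resp. `w = (0,1)M⁻¹ = (-c,a)`. Since `f` is `ℤ²`-periodic in `ξ`,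
integrating by parts on the torus `ℝ²/ℤ²` against `e(-nξ₁)` shows that `D₄` resp. `D₅` multiplies
`f̃_n(M)` by `2πi n w₁`. Doing this `m` times in the direction for which `|w₁| = max(|c|, |d|)`,
and bounding `f̃_n` of the `m`-th derivative by its supremum, gives the estimate with `C_m = 1`,
as `2 max(c², d²) ≥ c² + d²`. -/

open MeasureTheory Real Matrix Set
open scoped ENNReal

noncomputable section

instance : MeasurableSpace (Matrix (Fin 2) (Fin 2) ℝ) := borel _
instance : BorelSpace (Matrix (Fin 2) (Fin 2) ℝ) := ⟨rfl⟩

/-- The ambient space containing the group `G = SL(2,ℝ) ⋉ ℝ²` (pairs of a `2×2`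
real matrix and a row vector). -/
abbrev GG : Type := Matrix (Fin 2) (Fin 2) ℝ × (Fin 2 → ℝ)

/-- The multiplication law `(M,v)(M',v') = (MM', vM' + v')`. -/
def gmul (g h : GG) : GG := (g.1 * h.1, Matrix.vecMul g.2 h.1 + h.2)

/-- `G`, i.e. the set of pairs whose matrix part has determinant one. -/
def GSet : Set GG := {g | g.1.det = 1}

/-- `Γ = SL(2,ℤ) ⋉ ℤ²`. -/
def GammaSet : Set GG :=
  {g | g.1.det = 1 ∧ (∀ i j, ∃ n : ℤ, g.1 i j = (n : ℝ)) ∧ ∀ i, ∃ n : ℤ, g.2 i = (n : ℝ)}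

/-- `U^x`. -/
def uElt (x : ℝ) : GG := (!![1, x; 0, 1], 0)

/-- `a(y)`. -/
def aElt (y : ℝ) : GG := (!![Real.sqrt y, 0; 0, (Real.sqrt y)⁻¹], 0)

/-- `(1₂, ξ)`. -/
def transl (ξ : Fin 2 → ℝ) : GG := (1, ξ)

/-- The five one-parameter subgroups `e₁,…,e₅`. -/
def eFlow : Fin 5 → ℝ → GG :=
  ![fun t => (!![1, t; 0, 1], 0),
    fun t => (!![1, 0; t, 1], 0),
    fun t => (!![Real.exp t, 0; 0, Real.exp (-t)], 0),
    fun t => (1, ![t, 0]),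
    fun t => (1, ![0, t])]

/-- Left invariant derivative in the direction `e_i`. -/
def Dder (i : Fin 5) (F : GG → ℝ) : GG → ℝ :=
  fun g => deriv (fun t : ℝ => F (gmul g (eFlow i t))) 0

/-- Iterated left invariant derivative `D_w` associated to a word `w`. -/
def Dword : List (Fin 5) → (GG → ℝ) → GG → ℝ
  | [], F => F
  | i :: w, F => Dder i (Dword w F)

/-- `f ∈ C_b^k(Γ\G)` : `f` is `Γ`-left-invariant and all its left invariant
derivatives of order `≤ k` exist on `G`, are continuous and bounded there. -/
def InCb (k : ℕ) (f : GG → ℝ) : Prop :=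
  (∀ γ ∈ GammaSet, ∀ g ∈ GSet, f (gmul γ g) = f g) ∧
  (∀ w : List (Fin 5), w.length ≤ k →
      ContinuousOn (Dword w f) GSet ∧ ∃ B : ℝ, ∀ g ∈ GSet, |Dword w f g| ≤ B) ∧
  (∀ (i : Fin 5) (w : List (Fin 5)), (i :: w).length ≤ k → ∀ g ∈ GSet,
      DifferentiableAt ℝ (fun t : ℝ => Dword w f (gmul g (eFlow i t))) 0)

/-- The norm `‖f‖_{C_b^k} = ∑_w sup_{g ∈ G} |D_w f(g)|`, summed over all words of
length `≤ k`. -/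
def CbNorm (k : ℕ) (f : GG → ℝ) : ℝ :=
  ∑ n ∈ Finset.range (k + 1), ∑ w : Fin n → Fin 5,
    ⨆ g : GSet, |Dword (List.ofFn w) f (g : GG)|

/-- `ν` is a left Haar measure on `G` (viewed as a measure on the ambient space
which is concentrated on `GSet`): left invariant, finite on compacts and positive
on nonempty relatively open subsets of `G`. -/
def IsHaarOnG (ν : Measure GG) : Prop :=
  ν GSetᶜ = 0 ∧
  (∀ g ∈ GSet, MeasurePreserving (fun h => gmul g h) ν ν) ∧
  (∀ K : Set GG, IsCompact K → ν K < ⊤) ∧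
  (∀ U : Set GG, IsOpen U → (U ∩ GSet).Nonempty → 0 < ν U)

/-- `F` is a `ν`-measurable fundamental domain for the left action of `Γ` on `G`. -/
def IsFundDom (ν : Measure GG) (F : Set GG) : Prop :=
  MeasurableSet F ∧ F ⊆ GSet ∧
  ν (GSet \ ⋃ γ ∈ GammaSet, gmul γ '' F) = 0 ∧
  ∀ γ₁ ∈ GammaSet, ∀ γ₂ ∈ GammaSet, γ₁ ≠ γ₂ → ν (gmul γ₁ '' F ∩ gmul γ₂ '' F) = 0

/-- `∫_X f dμ = ν(F)⁻¹ ∫_F f dν`. -/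
def XAvg (ν : Measure GG) (F : Set GG) (f : GG → ℝ) : ℝ :=
  (ν F).toReal⁻¹ * ∫ g in F, f g ∂ν

/-- `⟨x⟩`, the distance from `x` to the nearest integer. -/
def nint (x : ℝ) : ℝ := |x - (round x : ℝ)|

/-- The majorant `b_{ξ,L}(y)`, computed in `[0,∞]` with the convention `a/0 = ∞`. -/
def bMajE (ξ : Fin 2 → ℝ) (L y : ℝ) : ℝ≥0∞ :=
  ⨆ q : ℕ+, min (min (ENNReal.ofReal (1 / (q : ℝ) ^ 2))
      (ENNReal.ofReal (Real.sqrt y) / ENNReal.ofReal (L * (q : ℝ) * nint ((q : ℝ) * ξ 0))))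
    (ENNReal.ofReal (Real.sqrt y) / ENNReal.ofReal ((q : ℝ) * nint ((q : ℝ) * ξ 1)))

/-- The majorant `b_{ξ,L}(y)` as a real number (it is always `≤ 1`). -/
def bMaj (ξ : Fin 2 → ℝ) (L y : ℝ) : ℝ := (bMajE ξ L y).toReal

/-- The Euclidean norm on `ℝ²`. -/
def eNorm2 (v : Fin 2 → ℝ) : ℝ := Real.sqrt (v 0 ^ 2 + v 1 ^ 2)

/-- `ℓ(M)`: the Euclidean length of the shortest nonzero vector of `ℤ²M`. -/
def ellM (M : Matrix (Fin 2) (Fin 2) ℝ) : ℝ :=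
  ⨅ m : {m : Fin 2 → ℤ // m ≠ 0}, eNorm2 (Matrix.vecMul (fun i => (m.1 i : ℝ)) M)

/-- `y_g(T) = T⁻¹ ℓ(g a(T))⁻²`. -/
def ygT (g : GG) (T : ℝ) : ℝ := T⁻¹ * (ellM ((gmul g (aElt T)).1) ^ 2)⁻¹

/-- The set of `δ > 0` such that for all `1 ≤ q ≤ δ^{-1/2}`, the set `(q⁻¹ℤ²)g`
is disjoint from `(1/(δq²)) 𝔯_T`. -/
def bgSet (g : GG) (T : ℝ) : Set ℝ :=
  {δ | 0 < δ ∧ ∀ q : ℕ+, ((q : ℕ) : ℝ) ≤ (Real.sqrt δ)⁻¹ → ∀ m : Fin 2 → ℤ,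
    ¬ (|Matrix.vecMul (fun i => (m i : ℝ) / ((q : ℕ) : ℝ)) g.1 0 + g.2 0| ≤
          1 / (δ * ((q : ℕ) : ℝ) ^ 2 * T) ∧
       |Matrix.vecMul (fun i => (m i : ℝ) / ((q : ℕ) : ℝ)) g.1 1 + g.2 1| ≤
          1 / (δ * ((q : ℕ) : ℝ) ^ 2))}

/-- `b_g(T)`, computed in `[0,∞]` (it is `∞` if no `δ > 0` qualifies). -/
def bgE (g : GG) (T : ℝ) : ℝ≥0∞ := sInf (ENNReal.ofReal '' bgSet g T)

/-- The Sobolev norm `‖φ‖_{W^{k,1}}`. -/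
def W11Norm (k : ℕ) (φ : ℝ → ℝ) : ℝ :=
  ∑ j ∈ Finset.range (k + 1), ∫ x : ℝ, |iteratedDeriv j φ x|

/-- `𝔐̃_ξ(X) = ∑_{k≥1} σ(k) min(1/k², 1/(Xk⟨kξ⟩))`, a term with `⟨kξ⟩ = 0` being
read as `σ(k)/k²`. -/
def Mtilde (ξ X : ℝ) : ℝ :=
  ∑' k : ℕ+, (((k : ℕ).divisors.card : ℝ) *
    (if nint (((k : ℕ) : ℝ) * ξ) = 0 then 1 / ((k : ℕ) : ℝ) ^ 2
     else min (1 / ((k : ℕ) : ℝ) ^ 2) (1 / (X * ((k : ℕ) : ℝ) * nint (((k : ℕ) : ℝ) * ξ)))))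

/-- `e(x) = e^{2πix}`. -/
def e2πi (x : ℝ) : ℂ := Complex.exp (2 * (Real.pi : ℂ) * Complex.I * (x : ℂ))

/-- The Fourier coefficient `f̂(M,m)` of a `Γ`-invariant function on `G`. -/
def fhat (f : GG → ℂ) (M : Matrix (Fin 2) (Fin 2) ℝ) (m : Fin 2 → ℤ) : ℂ :=
  ∫ ξ in Set.univ.pi fun _ : Fin 2 => Set.Icc (0:ℝ) 1,
    f (gmul (transl ξ) (M, 0)) * e2πi (-(∑ i, (m i : ℝ) * ξ i))

/-- `f̃_n(M) = f̂(M,(n,0))`. -/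
def ftilde (f : GG → ℂ) (n : ℤ) (M : Matrix (Fin 2) (Fin 2) ℝ) : ℂ := fhat f M ![n, 0]

end

theorem e2πi_add_intCast (x : ℝ) (k : ℤ) : e2πi (x + k) = e2πi x := by
  rw [e2πi, e2πi, Complex.ofReal_add, mul_add, Complex.exp_add, Complex.ofReal_intCast,
    show 2 * (π : ℂ) * Complex.I * k = k * (2 * π * Complex.I) by ring,
    Complex.exp_int_mul_two_pi_mul_I, mul_one]

theorem norm_e2πi (x : ℝ) : ‖e2πi x‖ = 1 := by
  rw [e2πi, Complex.norm_exp]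
  simp

@[fun_prop]
theorem continuous_e2πi : Continuous e2πi := by
  unfold e2πi; fun_prop

theorem HasDerivAt.e2πi {g : ℝ → ℝ} {g' x : ℝ} (hg : HasDerivAt g g' x) :
    HasDerivAt (fun s => e2πi (g s)) (2 * π * Complex.I * g' * e2πi (g x)) x := by
  have h := (hg.ofReal_comp.const_mul (2 * (π : ℂ) * Complex.I)).cexp
  unfold _root_.e2πi
  convert h using 1
  ring

def IntegerPeriodic {ι E : Type*} (Φ : (ι → ℝ) → E) : Prop :=
  ∀ (p : ι → ℤ) (ξ : ι → ℝ), Φ (ξ + fun i => (p i : ℝ)) = Φ ξ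

section UnitCube

open scoped Pointwise

variable {ι E : Type*} [NormedAddCommGroup E] [NormedSpace ℝ E]

theorem IntegerPeriodic.mul {R : Type*} [Mul R] {Φ Ψ : (ι → ℝ) → R} (hΦ : IntegerPeriodic Φ)
    (hΨ : IntegerPeriodic Ψ) : IntegerPeriodic fun ξ => Φ ξ * Ψ ξ :=
  fun p ξ => by simp only [hΦ p ξ, hΨ p ξ]

variable [Fintype ι]

theorem setIntegral_unitCube_add_eq {Φ : (ι → ℝ) → E} (hΦ : IntegerPeriodic Φ) (u : ι → ℝ) :
    ∫ ξ in univ.pi fun _ => Icc (0 : ℝ) 1, Φ (ξ + u) =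
      ∫ ξ in univ.pi fun _ => Icc (0 : ℝ) 1, Φ ξ := by
  set L := Submodule.span ℤ (range (Pi.basisFun ℝ ι))
  have : Countable L.toAddSubgroup := inferInstanceAs (Countable L)
  have hF := ZSpan.isAddFundamentalDomain' (Pi.basisFun ℝ ι) volume
  rw [ZSpan.fundamentalDomain_pi_basisFun] at hF
  have hL : ∀ {Ψ : (ι → ℝ) → E}, IntegerPeriodic Ψ → ∀ (g : L.toAddSubgroup) ξ,
      Ψ (g +ᵥ ξ) = Ψ ξ := by
    intro Ψ hΨ g ξ
    choose p hp using ((Pi.basisFun ℝ ι).mem_span_iff_repr_mem ℤ g).mp g.2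
    have hg : (g : ι → ℝ) = fun i => (p i : ℝ) := funext fun i => by simpa using (hp i).symm
    rw [Submodule.vadd_def, vadd_eq_add, hg, add_comm]
    exact hΨ p ξ
  have hae : (univ.pi fun _ : ι => Ico (0 : ℝ) 1) =ᵐ[volume] univ.pi fun _ => Icc (0 : ℝ) 1 :=
    Measure.pi_Ico_ae_eq_pi_Icc
  have hpre : (fun x => x + u) ⁻¹' (univ.pi fun _ : ι => Ico (0 : ℝ) 1) =
      -u +ᵥ univ.pi fun _ : ι => Ico (0 : ℝ) 1 := by
    ext ξ; simp [Set.mem_vadd_set_iff_neg_vadd_mem, add_comm]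
  rw [← setIntegral_congr_set hae, ← setIntegral_congr_set hae,
    hF.setIntegral_eq (hF.vadd_of_comm (-u)) (hL fun p ξ => by rw [add_right_comm, hΦ]), ← hpre]
  exact (measurePreserving_add_right volume u).setIntegral_preimage_emb
    (measurableEmbedding_addRight u) Φ _

theorem setIntegral_unitCube_deriv_eq_zero {Φ Φ' : (ι → ℝ) → E} (hΦ : IntegerPeriodic Φ)
    (hΦc : Continuous Φ) (hΦ'c : Continuous Φ') {w : ι → ℝ}
    (hderiv : ∀ ξ, HasDerivAt (fun s : ℝ => Φ (ξ + s • w)) (Φ' ξ) 0) :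
    ∫ ξ in univ.pi fun _ => Icc (0 : ℝ) 1, Φ' ξ = 0 := by
  set K : Set (ι → ℝ) := univ.pi fun _ => Icc (0 : ℝ) 1
  have hK : IsCompact K := isCompact_univ_pi fun _ => isCompact_Icc
  have hline : Continuous fun p : (ι → ℝ) × ℝ => p.1 + p.2 • w := by fun_prop
  obtain ⟨B, hB⟩ := ((hK.prod (isCompact_closedBall (0 : ℝ) 1)).image hline)
    |>.exists_bound_of_continuousOn hΦ'c.continuousOn
  have hbound : ∀ᵐ ξ ∂volume.restrict K, ∀ s ∈ Metric.ball (0 : ℝ) 1, ‖Φ' (ξ + s • w)‖ ≤ B :=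
    ae_restrict_of_forall_mem (MeasurableSet.univ_pi fun _ => measurableSet_Icc)
      fun ξ hξ s hs => hB _ ⟨(ξ, s), ⟨hξ, Metric.ball_subset_closedBall hs⟩, rfl⟩
  have hderiv' : ∀ ξ (s : ℝ), HasDerivAt (fun s : ℝ => Φ (ξ + s • w)) (Φ' (ξ + s • w)) s := by
    intro ξ s
    have h : HasDerivAt (fun t : ℝ => Φ (ξ + s • w + t • w)) (Φ' (ξ + s • w)) (s - s) := by
      rw [sub_self]; exact hderiv _
    refine (h.comp_sub_const s s).congr_of_eventuallyEq (Filter.Eventually.of_forall fun x => ?_)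
    simp only [sub_smul]
    abel_nf
  have hmean := (hasDerivAt_integral_of_dominated_loc_of_deriv_le (μ := volume.restrict K)
    (F := fun s ξ => Φ (ξ + s • w)) (F' := fun s ξ => Φ' (ξ + s • w)) (x₀ := 0)
    (Metric.ball_mem_nhds 0 one_pos)
    (Filter.Eventually.of_forall fun s => (hΦc.comp (by fun_prop)).aestronglyMeasurable)
    ((hΦc.comp (by fun_prop)).continuousOn.integrableOn_compact hK)
    (hΦ'c.comp (by fun_prop)).aestronglyMeasurable hbound (integrableOn_const hK.measure_lt_top.ne)
    (ae_of_all _ fun ξ s _ => hderiv' ξ s)).2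
  have hconst : HasDerivAt (fun s : ℝ => ∫ ξ in K, Φ (ξ + s • w)) 0 0 := by
    have : (fun s : ℝ => ∫ ξ in K, Φ (ξ + s • w)) = fun _ => ∫ ξ in K, Φ ξ :=
      funext fun s => setIntegral_unitCube_add_eq hΦ (s • w)
    rw [this]
    exact hasDerivAt_const _ _
  simpa using hmean.unique hconst

theorem integerPeriodic_e2πi_dotProduct (m : ι → ℤ) :
    IntegerPeriodic fun ξ : ι → ℝ => e2πi (-(∑ i, (m i : ℝ) * ξ i)) := by
  intro p ξ
  show e2πi _ = e2πi _
  have h : -(∑ i, (m i : ℝ) * (ξ + fun i => (p i : ℝ)) i) =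
      -(∑ i, (m i : ℝ) * ξ i) + ((-∑ i, m i * p i : ℤ) : ℝ) := by
    push_cast
    simp only [Pi.add_apply, mul_add, Finset.sum_add_distrib]
    ring
  rw [h, e2πi_add_intCast]

/-- Integration by parts on the torus `ℝ^ι / ℤ^ι` against the character `e(-m·ξ)`. -/
theorem setIntegral_unitCube_deriv_mul_e2πi {F DF : (ι → ℝ) → ℂ} (hF : IntegerPeriodic F)
    (hFc : Continuous F) (hDFc : Continuous DF) {w : ι → ℝ}
    (hderiv : ∀ ξ, HasDerivAt (fun s : ℝ => F (ξ + s • w)) (DF ξ) 0) (m : ι → ℤ) :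
    ∫ ξ in univ.pi fun _ => Icc (0 : ℝ) 1, DF ξ * e2πi (-(∑ i, (m i : ℝ) * ξ i)) =
      2 * π * Complex.I * (∑ i, (m i : ℝ) * w i) *
        ∫ ξ in univ.pi fun _ => Icc (0 : ℝ) 1, F ξ * e2πi (-(∑ i, (m i : ℝ) * ξ i)) := by
  set χ : (ι → ℝ) → ℂ := fun ξ => e2πi (-(∑ i, (m i : ℝ) * ξ i))
  set c : ℂ := 2 * π * Complex.I * (∑ i, (m i : ℝ) * w i)
  have hχc : Continuous χ := by fun_prop
  have hχ : ∀ ξ, HasDerivAt (fun s : ℝ => χ (ξ + s • w)) (-c * χ ξ) 0 := by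
    intro ξ
    have hlin : HasDerivAt (fun s : ℝ => -(∑ i, (m i : ℝ) * (ξ + s • w) i))
        (-(∑ i, (m i : ℝ) * w i)) 0 := by
      have h : (fun s : ℝ => -(∑ i, (m i : ℝ) * (ξ + s • w) i)) =
          fun s => -(∑ i, (m i : ℝ) * ξ i) + s * -(∑ i, (m i : ℝ) * w i) := by
        funext s
        simp only [Pi.add_apply, Pi.smul_apply, smul_eq_mul, mul_add, Finset.sum_add_distrib,
          mul_left_comm _ s, ← Finset.mul_sum]
        ring
      rw [h]
      simpa only [id, one_mul] using ((hasDerivAt_id (0 : ℝ)).mul_const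
        (-(∑ i, (m i : ℝ) * w i))).const_add (-(∑ i, (m i : ℝ) * ξ i))
    convert hlin.e2πi using 1
    simp [c, χ]
  have hvanish := setIntegral_unitCube_deriv_eq_zero (hF.mul (integerPeriodic_e2πi_dotProduct m))
    (hFc.mul hχc) ((hDFc.mul hχc).add (continuous_const.mul (hFc.mul hχc)))
    (Φ' := fun ξ => DF ξ * χ ξ + -c * (F ξ * χ ξ)) (w := w)
    fun ξ => by
      refine ((hderiv ξ).mul (hχ ξ)).congr_deriv ?_
      simp only [zero_smul, add_zero]
      ring
  have hK : IsCompact (univ.pi fun _ : ι => Icc (0 : ℝ) 1) :=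
    isCompact_univ_pi fun _ => isCompact_Icc
  show ∫ ξ in _, DF ξ * χ ξ = c * ∫ ξ in _, F ξ * χ ξ
  rw [integral_add (f := fun ξ => DF ξ * χ ξ) (g := fun ξ => -c * (F ξ * χ ξ))
    ((hDFc.mul hχc).continuousOn.integrableOn_compact hK)
    ((continuous_const.mul (hFc.mul hχc)).continuousOn.integrableOn_compact hK),
    integral_const_mul] at hvanish
  linear_combination hvanish

end UnitCube

theorem gmul_assoc (g h k : GG) : gmul (gmul g h) k = gmul g (gmul h k) := by
  simp only [gmul, Matrix.mul_assoc, Matrix.add_vecMul, Matrix.vecMul_vecMul, add_assoc]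

theorem gmul_mem_GSet {g h : GG} (hg : g ∈ GSet) (hh : h ∈ GSet) : gmul g h ∈ GSet := by
  simp_all [GSet, gmul, Matrix.det_mul]

theorem eFlow_mem_GSet (i : Fin 5) (t : ℝ) : eFlow i t ∈ GSet := by
  fin_cases i <;> simp [GSet, eFlow, Matrix.det_fin_two_of, ← Real.exp_add]

theorem transl_mem_GammaSet (p : Fin 2 → ℤ) : transl (fun i => (p i : ℝ)) ∈ GammaSet := by
  refine ⟨by simp [transl], fun i j => ⟨if i = j then 1 else 0, ?_⟩, fun i => ⟨p i, rfl⟩⟩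
  split_ifs with h <;> simp [transl, h]

theorem eFlow_three (t : ℝ) : eFlow 3 t = transl (t • ![1, 0]) := by
  simp [eFlow, transl]

theorem eFlow_four (t : ℝ) : eFlow 4 t = transl (t • ![0, 1]) := by
  simp [eFlow, transl]

theorem Dword_gmul_of_mem_GammaSet {f : GG → ℝ}
    (hf : ∀ γ ∈ GammaSet, ∀ g ∈ GSet, f (gmul γ g) = f g) (w : List (Fin 5)) {γ : GG}
    (hγ : γ ∈ GammaSet) {g : GG} (hg : g ∈ GSet) : Dword w f (gmul γ g) = Dword w f g := by
  induction w generalizing g with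
  | nil => exact hf γ hγ g hg
  | cons i w ih =>
    simp only [Dword, Dder, gmul_assoc]
    congr 1
    funext t
    exact ih (gmul_mem_GSet hg (eFlow_mem_GSet i t))

theorem transl_gmul_transl (p q : Fin 2 → ℝ) : gmul (transl p) (transl q) = transl (p + q) := by
  simp [gmul, transl]

theorem gmul_transl_vecMul (M : Matrix (Fin 2) (Fin 2) ℝ) (v : Fin 2 → ℝ) :
    gmul (M, 0) (transl (vecMul v M)) = gmul (transl v) (M, 0) := by
  simp [gmul, transl]

theorem transl_gmul_mem_GSet (ξ : Fin 2 → ℝ) {M : Matrix (Fin 2) (Fin 2) ℝ} (hM : M.det = 1) :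
    gmul (transl ξ) (M, 0) ∈ GSet := by
  simpa [GSet, gmul, transl] using hM

theorem continuous_transl_gmul (M : Matrix (Fin 2) (Fin 2) ℝ) :
    Continuous fun ξ => gmul (transl ξ) (M, 0) := by
  simp only [gmul, transl, Matrix.one_mul, add_zero]
  exact continuous_const.prodMk (continuous_id.matrix_vecMul continuous_const)

theorem fhat_Dder_eq {F : GG → ℝ} {i : Fin 5} {u : Fin 2 → ℝ}
    (hi : ∀ t, eFlow i t = transl (t • u))
    (hinv : ∀ (p : Fin 2 → ℤ), ∀ g ∈ GSet, F (gmul (transl fun j => (p j : ℝ)) g) = F g)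
    (hF : ContinuousOn F GSet) (hDF : ContinuousOn (Dder i F) GSet)
    (hdiff : ∀ g ∈ GSet, DifferentiableAt ℝ (fun t => F (gmul g (eFlow i t))) 0)
    {M : Matrix (Fin 2) (Fin 2) ℝ} (hM : M.det = 1) {w : Fin 2 → ℝ} (hw : vecMul w M = u)
    (m : Fin 2 → ℤ) :
    fhat (fun g => (Dder i F g : ℂ)) M m =
      2 * π * Complex.I * (∑ j, (m j : ℝ) * w j) * fhat (fun g => (F g : ℂ)) M m := by
  have hflow : ∀ ξ (s : ℝ), gmul (gmul (transl ξ) (M, 0)) (eFlow i s) =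
      gmul (transl (ξ + s • w)) (M, 0) := by
    intro ξ s
    rw [hi, ← hw, ← Matrix.smul_vecMul, gmul_assoc, gmul_transl_vecMul, ← gmul_assoc,
      transl_gmul_transl]
  refine setIntegral_unitCube_deriv_mul_e2πi (fun p ξ => ?_)
    (Complex.continuous_ofReal.comp (hF.comp_continuous (continuous_transl_gmul M)
      fun ξ => transl_gmul_mem_GSet ξ hM))
    (Complex.continuous_ofReal.comp (hDF.comp_continuous (continuous_transl_gmul M)
      fun ξ => transl_gmul_mem_GSet ξ hM))
    (fun ξ => ?_) m
  · simp only [Function.comp_apply]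
    rw [add_comm, ← transl_gmul_transl, gmul_assoc, hinv p _ (transl_gmul_mem_GSet ξ hM)]
  · have h := (hdiff _ (transl_gmul_mem_GSet ξ hM)).hasDerivAt.ofReal_comp
    exact h.congr_of_eventuallyEq (Filter.Eventually.of_forall fun s => by simp [hflow])

theorem fhat_Dword_replicate_eq {k : ℕ} {f : GG → ℝ} (hf : InCb k f) {i : Fin 5}
    {u : Fin 2 → ℝ} (hi : ∀ t, eFlow i t = transl (t • u)) {M : Matrix (Fin 2) (Fin 2) ℝ}
    (hM : M.det = 1) {w : Fin 2 → ℝ} (hw : vecMul w M = u) (m : Fin 2 → ℤ) {j : ℕ}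
    (hj : j ≤ k) :
    fhat (fun g => (Dword (List.replicate j i) f g : ℂ)) M m =
      (2 * π * Complex.I * (∑ l, (m l : ℝ) * w l)) ^ j * fhat (fun g => (f g : ℂ)) M m := by
  induction j with
  | zero => simp [Dword]
  | succ j ih =>
    have hlen : (List.replicate j i).length ≤ k := by rw [List.length_replicate]; omega
    rw [List.replicate_succ, Dword, pow_succ, mul_comm _ (2 * π * Complex.I * _), mul_assoc,
      ← ih (by omega)]
    exact fhat_Dder_eq hi
      (fun p g hg => Dword_gmul_of_mem_GammaSet hf.1 _ (transl_mem_GammaSet p) hg)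
      (hf.2.1 _ hlen).1 (hf.2.1 (i :: List.replicate j i) (by simpa using hj)).1
      (hf.2.2 i _ (by simpa using hj)) hM hw m

theorem norm_fhat_le {F : GG → ℝ} {B : ℝ} (hB : ∀ g ∈ GSet, |F g| ≤ B)
    {M : Matrix (Fin 2) (Fin 2) ℝ} (hM : M.det = 1) (m : Fin 2 → ℤ) :
    ‖fhat (fun g => (F g : ℂ)) M m‖ ≤ B := by
  have hvol : volume (univ.pi fun _ : Fin 2 => Icc (0 : ℝ) 1) = 1 := by
    simp [Real.volume_Icc_pi]
  have h := norm_setIntegral_le_of_norm_le_const (C := B) (hvol ▸ ENNReal.one_lt_top)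
    (f := fun ξ => (F (gmul (transl ξ) (M, 0)) : ℂ) * e2πi (-(∑ i, (m i : ℝ) * ξ i)))
    fun ξ _ => by
      rw [norm_mul, norm_e2πi, mul_one, Complex.norm_real, Real.norm_eq_abs]
      exact hB _ (transl_gmul_mem_GSet ξ hM)
  rwa [measureReal_def, hvol, ENNReal.toReal_one, mul_one] at h

theorem abs_Dword_le_CbNorm {k : ℕ} {f : GG → ℝ} (hf : InCb k f) {w : List (Fin 5)}
    (hw : w.length ≤ k) {g : GG} (hg : g ∈ GSet) : |Dword w f g| ≤ CbNorm k f := by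
  have hsup : ∀ n (v : Fin n → Fin 5), 0 ≤ ⨆ g : GSet, |Dword (List.ofFn v) f (g : GG)| :=
    fun n v => Real.iSup_nonneg fun _ => abs_nonneg _
  obtain ⟨B, hB⟩ := (hf.2.1 w hw).2
  calc |Dword w f g| ≤ ⨆ g : GSet, |Dword (List.ofFn w.get) f (g : GG)| := by
        rw [List.ofFn_get]
        exact le_ciSup (f := fun g : GSet => |Dword w f g|)
          ⟨B, by rintro _ ⟨g', rfl⟩; exact hB _ g'.2⟩ ⟨g, hg⟩
    _ ≤ ∑ v : Fin w.length → Fin 5, ⨆ g : GSet, |Dword (List.ofFn v) f (g : GG)| :=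
        Finset.single_le_sum (fun v _ => hsup _ v) (Finset.mem_univ _)
    _ ≤ CbNorm k f :=
        Finset.single_le_sum (f := fun n => ∑ v : Fin n → Fin 5,
          ⨆ g : GSet, |Dword (List.ofFn v) f (g : GG)|)
          (fun n _ => Finset.sum_nonneg fun v _ => hsup n v)
          (Finset.mem_range.mpr (Nat.lt_succ_of_le hw))

theorem norm_fhat_mul_le_CbNorm {k : ℕ} {f : GG → ℝ} (hf : InCb k f) {i : Fin 5}
    {u : Fin 2 → ℝ} (hi : ∀ t, eFlow i t = transl (t • u)) {M : Matrix (Fin 2) (Fin 2) ℝ}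
    (hM : M.det = 1) {w : Fin 2 → ℝ} (hw : vecMul w M = u) (m : Fin 2 → ℤ) :
    ‖fhat (fun g => (f g : ℂ)) M m‖ * (2 * π * |∑ l, (m l : ℝ) * w l|) ^ k ≤ CbNorm k f := by
  have h := norm_fhat_le
    (fun g hg => abs_Dword_le_CbNorm hf (w := List.replicate k i) (by simp) hg) hM m
  rw [fhat_Dword_replicate_eq hf hi hM hw m le_rfl, norm_mul, norm_pow] at h
  simp only [norm_mul, Complex.norm_ofNat, Complex.norm_real, Complex.norm_I, Real.norm_eq_abs,
    abs_of_pos pi_pos, mul_one] at h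
  linarith

theorem le_div_pow_mul_rpow_of_mul_le {x N n ρ S : ℝ} (k : ℕ) (hx : 0 ≤ x) (hn : 0 < n)
    (hS : 0 < S) (hSρ : S ≤ 2 * ρ ^ 2) (h : x * (2 * π * |n * ρ|) ^ k ≤ N) :
    x ≤ N / (n ^ k * S ^ ((k : ℝ) / 2)) := by
  have hsqrt : √S ≤ 2 * |ρ| := by
    rw [← Real.sqrt_sq (by positivity : 0 ≤ 2 * |ρ|)]
    exact Real.sqrt_le_sqrt (by nlinarith [sq_abs ρ])
  have hbase : n * √S ≤ 2 * π * |n * ρ| := by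
    rw [abs_mul, abs_of_pos hn]
    calc n * √S ≤ n * (2 * |ρ|) := mul_le_mul_of_nonneg_left hsqrt hn.le
      _ ≤ 2 * π * (n * |ρ|) := by nlinarith [pi_gt_three, mul_nonneg hn.le (abs_nonneg ρ)]
  rw [le_div_iff₀ (by positivity), Real.rpow_div_two_eq_sqrt _ hS.le, Real.rpow_natCast,
    ← mul_pow]
  exact (mul_le_mul_of_nonneg_left (pow_le_pow_left₀ (by positivity) hbase k) hx).trans h

noncomputable section

/-- **Lemma 4.2 (decay of Fourier coefficients).** For every `m ≥ 0` there is
`C_m > 0` such that for every `n ∈ ℤ⁺`, every `f ∈ C_b^m(Γ\G)` and every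
`[[a,b],[c,d]] ∈ SL(2,ℝ)`:
`|f̃_n([[a,b],[c,d]])| ≤ C_m ‖f‖_{C_b^m} / (n^m (c²+d²)^{m/2})`. -/
theorem fourier_coefficient_decay (m : ℕ) :
    ∃ C : ℝ, 0 < C ∧ ∀ (n : ℕ+) (f : GG → ℝ), InCb m f →
      ∀ a b c d : ℝ, a * d - b * c = 1 →
        ‖ftilde (fun g => (f g : ℂ)) ((n : ℕ) : ℤ) !![a, b; c, d]‖ ≤
          C * CbNorm m f / (((n : ℕ) : ℝ) ^ m * (c ^ 2 + d ^ 2) ^ ((m : ℝ) / 2)) := by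
  refine ⟨1, one_pos, fun n f hf a b c d hdet => ?_⟩
  have hM : (!![a, b; c, d]).det = 1 := by rw [Matrix.det_fin_two_of]; linarith
  have hS : 0 < c ^ 2 + d ^ 2 := by
    by_contra! h
    have hc : c = 0 := by nlinarith
    have hd : d = 0 := by nlinarith
    simp [hc, hd] at hdet
  -- Integrate by parts along whichever of `e₄`, `e₅` pairs with the larger of `|c|`, `|d|`.
  obtain ⟨i, u, w, hi, hw, hSw⟩ : ∃ i u w, (∀ t, eFlow i t = transl (t • u)) ∧
      vecMul w !![a, b; c, d] = u ∧ c ^ 2 + d ^ 2 ≤ 2 * w 0 ^ 2 := by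
    rcases le_total |c| |d| with h | h
    · refine ⟨3, _, ![d, -b], eFlow_three, ?_,
        show c ^ 2 + d ^ 2 ≤ 2 * d ^ 2 by nlinarith [sq_abs c, sq_abs d, abs_nonneg c]⟩
      ext j; fin_cases j <;> simp [Matrix.vecMul, dotProduct] <;> linarith
    · refine ⟨4, _, ![-c, a], eFlow_four, ?_,
        show c ^ 2 + d ^ 2 ≤ 2 * (-c) ^ 2 by nlinarith [sq_abs c, sq_abs d, abs_nonneg d]⟩
      ext j; fin_cases j <;> simp [Matrix.vecMul, dotProduct] <;> linarith
  have key := norm_fhat_mul_le_CbNorm hf hi hM hw ![(n : ℤ), 0]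
  simp only [Fin.sum_univ_two, Matrix.cons_val_zero, Matrix.cons_val_one,
    Int.cast_zero, zero_mul, add_zero, Int.cast_natCast] at key
  rw [one_mul]
  exact le_div_pow_mul_rpow_of_mul_le m (norm_nonneg _) (by exact_mod_cast n.pos) hS hSw key

end
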